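/- Let f be analytic on the open unit disk with |f(z)| < 1 there, f(z) = ∑ aₙ zⁿ, and let m ≥ 1 be an integer. If r ∈ [0,1) satisfies (1 - r)(r²ᵐ + 2rᵐ - 1) + 2r²(1 + rᵐ)² ≤ 0, then for all z with |z| = r, |f(zᵐ)| + |z|ᵐ |f'(zᵐ)| + ∑_{k≥2} |aₖ| rᵏ ≤ 1. -/

import Mathlib

/-!
Write `c = |f 0|`, `w = zᵐ` and `ρ = |w| = rᵐ`. Three classical estimates for a holomorphic
self-map of the disc bound the three terms. Composing with the disc involutions
`φ_a(w) = (a - w) / (1 - ā w)` and applying the Schwarz lemma gives the Schwarz–Pick inequality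
`|f'(w)| (1 - |w|²) ≤ 1 - |f w|²` and the growth bound `|f w| ≤ (c + ρ) / (1 + cρ)`.
Wiener's inequality `|aₖ| ≤ 1 - c²` (`k ≥ 1`) comes from `h(u) = ∑ₙ a_{kn} uⁿ`: for a primitive
`k`-th root of unity `ω` we have `k h(zᵏ) = ∑ⱼ f(ωʲ z)`, so `h` is again a self-map of the disc,
and Schwarz–Pick at `0` for `h` reads `|aₖ| = |h'(0)| ≤ 1 - |h 0|² = 1 - c²`.

The left side is therefore at most `Φ(|f w|) + (1 - c²) r² / (1 - r)`, where
`Φ(x) = x + ρ (1 - x²) / (1 - ρ²)` is increasing on `[0, 1]` because the hypothesis forces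
`ρ² + 2ρ ≤ 1`. At `x = (c + ρ) / (1 + cρ)` we get `1 - Φ(x) = (1 - c)(1 - 2ρ - cρ²) / (1 + cρ)²`,
and the hypothesis on `r`, together with `(1 + c)(1 + cρ)² ≤ 2 (1 + ρ)²`, puts the tail below
this gap.
-/

open Metric Set Filter Topology Complex
open scoped ComplexConjugate

noncomputable def mobius (a w : ℂ) : ℂ := (a - w) / (1 - conj a * w)

section Mobius

variable {a w : ℂ}

lemma one_sub_conj_mul_ne_zero (ha : ‖a‖ < 1) (hw : ‖w‖ ≤ 1) : 1 - conj a * w ≠ 0 := by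
  have : ‖conj a * w‖ < 1 := by
    rw [norm_mul, RCLike.norm_conj]
    nlinarith [norm_nonneg a, norm_nonneg w]
  intro h
  rw [← sub_eq_zero.1 h, norm_one] at this
  exact this.false

lemma norm_one_sub_conj_mul_self (ha : ‖a‖ ≤ 1) : ‖1 - conj a * a‖ = 1 - ‖a‖ ^ 2 := by
  rw [← normSq_eq_conj_mul_self, normSq_eq_norm_sq, ← ofReal_one, ← ofReal_sub, norm_real,
    Real.norm_of_nonneg (by nlinarith [norm_nonneg a])]

@[simp] lemma mobius_self (a : ℂ) : mobius a a = 0 := by simp [mobius]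

@[simp] lemma mobius_zero (a : ℂ) : mobius a 0 = a := by simp [mobius]

lemma normSq_one_sub_conj_mul_sub_normSq_sub (a w : ℂ) :
    normSq (1 - conj a * w) - normSq (a - w) = (1 - normSq a) * (1 - normSq w) := by
  simp only [normSq_apply, sub_re, sub_im, mul_re, mul_im, conj_re, conj_im, one_re, one_im]
  ring

lemma norm_mobius_lt_one (ha : ‖a‖ < 1) (hw : ‖w‖ < 1) : ‖mobius a w‖ < 1 := by
  have hden := one_sub_conj_mul_ne_zero ha hw.le
  rw [mobius, norm_div, div_lt_one (norm_pos_iff.2 hden),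
    ← sq_lt_sq₀ (norm_nonneg _) (norm_nonneg _), ← normSq_eq_norm_sq, ← normSq_eq_norm_sq,
    ← sub_pos, normSq_one_sub_conj_mul_sub_normSq_sub, normSq_eq_norm_sq, normSq_eq_norm_sq]
  exact mul_pos (by nlinarith [norm_nonneg a]) (by nlinarith [norm_nonneg w])

lemma mapsTo_mobius (ha : ‖a‖ < 1) : MapsTo (mobius a) (ball 0 1) (ball 0 1) := fun w hw => by
  rw [mem_ball_zero_iff] at hw ⊢
  exact norm_mobius_lt_one ha hw

lemma mobius_mobius (ha : ‖a‖ < 1) (hw : ‖w‖ ≤ 1) : mobius a (mobius a w) = w := by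
  have hden := one_sub_conj_mul_ne_zero ha hw
  have ha' : 1 - conj a * a ≠ 0 := one_sub_conj_mul_ne_zero ha ha.le
  have hnum : a - mobius a w = w * (1 - conj a * a) / (1 - conj a * w) := by
    rw [mobius, eq_div_iff hden, sub_mul, div_mul_cancel₀ _ hden]
    ring
  have hden' : 1 - conj a * mobius a w = (1 - conj a * a) / (1 - conj a * w) := by
    rw [mobius, eq_div_iff hden, sub_mul, one_mul, mul_div_assoc', div_mul_cancel₀ _ hden]
    ring
  rw [mobius, hnum, hden', div_div_div_cancel_right₀ hden, mul_div_cancel_right₀ _ ha']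

lemma hasDerivAt_mobius (h : 1 - conj a * w ≠ 0) :
    HasDerivAt (mobius a) ((conj a * a - 1) / (1 - conj a * w) ^ 2) w :=
  (((hasDerivAt_id' w).const_sub a).div
    (((hasDerivAt_id' w).const_mul (conj a)).const_sub 1) h).congr_deriv (by ring)

lemma differentiableOn_mobius (ha : ‖a‖ < 1) : DifferentiableOn ℂ (mobius a) (ball 0 1) :=
  fun _ hw => (hasDerivAt_mobius (one_sub_conj_mul_ne_zero ha
    (mem_ball_zero_iff.1 hw).le)).differentiableAt.differentiableWithinAt

lemma norm_deriv_mobius (ha : ‖a‖ < 1) (hw : ‖w‖ ≤ 1) :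
    ‖deriv (mobius a) w‖ = (1 - ‖a‖ ^ 2) / ‖1 - conj a * w‖ ^ 2 := by
  rw [(hasDerivAt_mobius (one_sub_conj_mul_ne_zero ha hw)).deriv, norm_div, norm_pow, ← norm_neg,
    neg_sub, norm_one_sub_conj_mul_self ha.le]

lemma norm_mobius_mul_le (ha : ‖a‖ < 1) (hw : ‖w‖ < 1) :
    ‖mobius a w‖ * (1 + ‖a‖ * ‖w‖) ≤ ‖a‖ + ‖w‖ := by
  set s := (a * conj w).re
  have hs : -(‖a‖ * ‖w‖) ≤ s := by
    have := abs_re_le_norm (a * conj w)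
    rw [norm_mul, RCLike.norm_conj] at this
    exact neg_le_of_abs_le this
  have hnum : ‖a - w‖ ^ 2 = ‖a‖ ^ 2 + ‖w‖ ^ 2 - 2 * s := by
    simp only [← normSq_eq_norm_sq, normSq_sub, s]
  have hden : ‖1 - conj a * w‖ ^ 2 = 1 + ‖a‖ ^ 2 * ‖w‖ ^ 2 - 2 * s := by
    simp only [← normSq_eq_norm_sq, normSq_sub, normSq_one, normSq_mul, normSq_conj, one_mul, s]
    simp [mul_re, conj_re, conj_im]
  have hpos : 0 < ‖1 - conj a * w‖ := norm_pos_iff.2 (one_sub_conj_mul_ne_zero ha hw.le)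
  rw [mobius, norm_div, div_mul_eq_mul_div, div_le_iff₀ hpos,
    ← sq_le_sq₀ (by positivity) (by positivity), mul_pow, mul_pow, hnum, hden]
  have h1 : 0 ≤ 1 - ‖a‖ ^ 2 := by nlinarith [norm_nonneg a]
  have h2 : 0 ≤ 1 - ‖w‖ ^ 2 := by nlinarith [norm_nonneg w]
  -- the difference of the two sides is `2 (‖a‖ ‖w‖ + s) (1 - ‖a‖²) (1 - ‖w‖²)`
  nlinarith [mul_nonneg (mul_nonneg (neg_le_iff_add_nonneg.1 hs) h1) h2]

end Mobius

section SchwarzPick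

variable {f : ℂ → ℂ} (hd : DifferentiableOn ℂ f (ball 0 1))
  (hf : MapsTo f (ball 0 1) (ball 0 1))
include hd hf

theorem norm_deriv_zero_le_one_sub_sq_of_mapsTo_ball : ‖deriv f 0‖ ≤ 1 - ‖f 0‖ ^ 2 := by
  have h0 : (0 : ℂ) ∈ ball 0 1 := mem_ball_self one_pos
  have ha : ‖f 0‖ < 1 := mem_ball_zero_iff.1 (hf h0)
  have hG : MapsTo (mobius (f 0) ∘ f) (ball 0 1) (closedBall (mobius (f 0) (f 0)) 1) := by
    rw [mobius_self]
    exact ((mapsTo_mobius ha).comp hf).mono_right ball_subset_closedBall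
  have hSchwarz := norm_deriv_le_one_of_mapsTo_ball
    ((differentiableOn_mobius ha).comp hd hf) hG one_pos
  rw [deriv_comp _ ((differentiableOn_mobius ha).differentiableAt (isOpen_ball.mem_nhds (hf h0)))
    (hd.differentiableAt (isOpen_ball.mem_nhds h0)), norm_mul, norm_deriv_mobius ha ha.le,
    norm_one_sub_conj_mul_self ha.le] at hSchwarz
  have hpos : 0 < 1 - ‖f 0‖ ^ 2 := by nlinarith [norm_nonneg (f 0)]
  rwa [pow_two (1 - _), ← div_div, div_self hpos.ne', one_div, inv_mul_le_iff₀ hpos,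
    mul_one] at hSchwarz

theorem norm_deriv_mul_le_one_sub_sq_of_mapsTo_ball {w : ℂ} (hw : ‖w‖ < 1) :
    ‖deriv f w‖ * (1 - ‖w‖ ^ 2) ≤ 1 - ‖f w‖ ^ 2 := by
  have hmob : DifferentiableAt ℂ (mobius w) 0 :=
    (differentiableOn_mobius hw).differentiableAt (isOpen_ball.mem_nhds (mem_ball_self one_pos))
  have hfw : DifferentiableAt ℂ f (mobius w 0) := by
    rw [mobius_zero]
    exact hd.differentiableAt (isOpen_ball.mem_nhds (mem_ball_zero_iff.2 hw))
  have key := norm_deriv_zero_le_one_sub_sq_of_mapsTo_ball (f := f ∘ mobius w)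
    (hd.comp (differentiableOn_mobius hw) (mapsTo_mobius hw)) (hf.comp (mapsTo_mobius hw))
  rwa [deriv_comp _ hfw hmob, norm_mul, norm_deriv_mobius hw (by simp), Function.comp_apply,
    mobius_zero, mul_zero, sub_zero, norm_one, one_pow, div_one] at key

theorem norm_mul_one_add_le_of_mapsTo_ball {w : ℂ} (hw : ‖w‖ < 1) :
    ‖f w‖ * (1 + ‖f 0‖ * ‖w‖) ≤ ‖f 0‖ + ‖w‖ := by
  have ha : ‖f 0‖ < 1 := mem_ball_zero_iff.1 (hf (mem_ball_self one_pos))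
  have hfw : ‖f w‖ < 1 := mem_ball_zero_iff.1 (hf (mem_ball_zero_iff.2 hw))
  set t := mobius (f 0) (f w)
  have ht : ‖t‖ ≤ ‖w‖ := norm_le_norm_of_mapsTo_ball ((differentiableOn_mobius ha).comp hd hf)
    (((mapsTo_mobius ha).comp hf).mono_right ball_subset_closedBall) (mobius_self _) hw
  have hbound := norm_mobius_mul_le ha (ht.trans_lt hw)
  rw [mobius_mobius ha hfw.le] at hbound
  -- `x ↦ (‖f 0‖ + x) / (1 + ‖f 0‖ x)` is increasing, so `‖t‖` may be replaced by `‖w‖`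
  nlinarith [mul_nonneg (sub_nonneg.2 ht)
    (sub_nonneg.2 (mul_le_one₀ hfw.le (norm_nonneg _) ha.le)), norm_nonneg t]

end SchwarzPick

noncomputable def taylorCoeff (f : ℂ → ℂ) (k : ℕ) : ℂ := iteratedDeriv k f 0 / k.factorial

lemma hasSum_taylorCoeff_mul_pow {f : ℂ → ℂ} {R : ℝ} (hd : DifferentiableOn ℂ f (ball 0 R))
    {z : ℂ} (hz : ‖z‖ < R) : HasSum (fun k => taylorCoeff f k * z ^ k) (f z) := by
  have hcoeff : ∀ k, taylorCoeff f k * z ^ k =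
      (k.factorial : ℂ)⁻¹ • (z - 0) ^ k • iteratedDeriv k f 0 := fun k => by
    rw [taylorCoeff, sub_zero, smul_eq_mul, smul_eq_mul]
    ring
  simpa only [hcoeff] using hasSum_taylorSeries_on_ball hd (mem_ball_zero_iff.2 hz)

theorem IsPrimitiveRoot.sum_pow_pow_eq_ite {K : Type*} [Field K] {ω : K} {n : ℕ}
    (hω : IsPrimitiveRoot ω n) (k : ℕ) :
    ∑ j ∈ Finset.range n, (ω ^ j) ^ k = if n ∣ k then (n : K) else 0 := by
  simp_rw [pow_right_comm _ _ k]
  split_ifs with hk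
  · simp [(hω.pow_eq_one_iff_dvd k).2 hk]
  · have hne : ω ^ k ≠ 1 := fun h => hk ((hω.pow_eq_one_iff_dvd k).1 h)
    rw [geom_sum_eq hne, ← pow_mul, mul_comm, pow_mul, hω.pow_eq_one, one_pow, sub_self,
      zero_div]

theorem norm_taylorCoeff_le_one_of_mapsTo_ball {f : ℂ → ℂ}
    (hd : DifferentiableOn ℂ f (ball 0 1)) (hf : MapsTo f (ball 0 1) (ball 0 1)) (k : ℕ) :
    ‖taylorCoeff f k‖ ≤ 1 := by
  have hs : ∀ s ∈ Ioo (0 : ℝ) 1, ‖taylorCoeff f k‖ * s ^ k ≤ 1 := by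
    rintro s ⟨hs0, hs1⟩
    have hCauchy := norm_iteratedDeriv_le_of_forall_mem_sphere_norm_le k hs0
      (hd.diffContOnCl_ball (closedBall_subset_ball hs1)) (C := 1)
      fun z hz => (mem_ball_zero_iff.1 (hf (sphere_subset_ball hs1 hz))).le
    rw [taylorCoeff, norm_div, norm_natCast, div_mul_eq_mul_div, div_le_one (by positivity)]
    rwa [mul_one, le_div_iff₀ (by positivity)] at hCauchy
  have hlim : Tendsto (fun s : ℝ => ‖taylorCoeff f k‖ * s ^ k) (𝓝[<] 1)
      (𝓝 (‖taylorCoeff f k‖ * 1 ^ k)) :=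
    ((continuous_const.mul (continuous_pow k)).tendsto 1).mono_left nhdsWithin_le_nhds
  simpa using le_of_tendsto hlim (eventually_of_mem (Ioo_mem_nhdsLT zero_lt_one) hs)

noncomputable def sectionSeries (f : ℂ → ℂ) (n : ℕ) : FormalMultilinearSeries ℂ ℂ ℂ :=
  FormalMultilinearSeries.ofScalars ℂ fun k => taylorCoeff f (n * k)

lemma sectionSeries_apply (f : ℂ → ℂ) (n k : ℕ) (w : ℂ) :
    sectionSeries f n k (fun _ => w) = taylorCoeff f (n * k) * w ^ k :=
  FormalMultilinearSeries.ofScalars_apply_eq _ _ _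

section Wiener

variable {f : ℂ → ℂ} {n : ℕ} (hd : DifferentiableOn ℂ f (ball 0 1))
  (hf : MapsTo f (ball 0 1) (ball 0 1))
include hd hf

lemma hasFPowerSeriesOnBall_sectionSeries :
    HasFPowerSeriesOnBall (sectionSeries f n).sum (sectionSeries f n) 0 1 := by
  have hrad : ((1 : NNReal) : ENNReal) ≤ (sectionSeries f n).radius :=
    (sectionSeries f n).le_radius_of_bound 1 fun k => by
      simpa [sectionSeries, FormalMultilinearSeries.ofScalars_norm] using
        norm_taylorCoeff_le_one_of_mapsTo_ball hd hf (n * k)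
  exact ((sectionSeries f n).hasFPowerSeriesOnBall (zero_lt_one.trans_le hrad)).mono
    one_pos hrad

lemma hasSum_sectionSeries_sum_pow {z : ℂ} (hn : n ≠ 0) (hz : ‖z‖ < 1) :
    HasSum (fun k => if n ∣ k then taylorCoeff f k * z ^ k else 0)
      ((sectionSeries f n).sum (z ^ n)) := by
  have hzn : z ^ n ∈ eball (0 : ℂ) 1 := by
    rw [← ENNReal.coe_one, eball_coe, mem_ball_zero_iff, norm_pow]
    exact pow_lt_one₀ (norm_nonneg z) hz hn
  have hsum := (hasFPowerSeriesOnBall_sectionSeries (n := n) hd hf).hasSum hzn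
  simp only [zero_add, sectionSeries_apply, ← pow_mul] at hsum
  rw [← (mul_right_injective₀ hn).hasSum_iff]
  · have hterms : (fun k => if n ∣ k then taylorCoeff f k * z ^ k else 0) ∘ (n * ·) =
        fun k => taylorCoeff f (n * k) * z ^ (n * k) := by
      ext k
      simp
    rw [hterms]
    exact hsum
  · rintro k hk
    rw [if_neg fun ⟨j, hj⟩ => hk ⟨j, hj.symm⟩]

lemma sum_rotations_eq_mul_sectionSeries_sum {ω z : ℂ} (hω : IsPrimitiveRoot ω n)
    (hn : n ≠ 0) (hz : ‖z‖ < 1) :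
    ∑ j ∈ Finset.range n, f (ω ^ j * z) = n * (sectionSeries f n).sum (z ^ n) := by
  have hrot : HasSum (fun k => ∑ j ∈ Finset.range n, taylorCoeff f k * (ω ^ j * z) ^ k)
      (∑ j ∈ Finset.range n, f (ω ^ j * z)) :=
    hasSum_sum fun j _ => hasSum_taylorCoeff_mul_pow hd <| by
      rwa [norm_mul, norm_pow, Complex.norm_eq_one_of_pow_eq_one hω.pow_eq_one hn, one_pow,
        one_mul]
  have hterms : (fun k => ∑ j ∈ Finset.range n, taylorCoeff f k * (ω ^ j * z) ^ k) =
      fun k => n * if n ∣ k then taylorCoeff f k * z ^ k else 0 := by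
    ext k
    simp_rw [mul_pow, ← mul_assoc, mul_comm _ ((ω ^ _) ^ k), mul_assoc, ← Finset.sum_mul,
      hω.sum_pow_pow_eq_ite]
    split_ifs <;> ring
  rw [hterms] at hrot
  exact hrot.unique ((hasSum_sectionSeries_sum_pow hd hf hn hz).mul_left _)

lemma mapsTo_sectionSeries_sum (hn : n ≠ 0) :
    MapsTo (sectionSeries f n).sum (ball 0 1) (ball 0 1) := by
  intro w hw
  rw [mem_ball_zero_iff] at hw ⊢
  obtain ⟨z, rfl⟩ := IsAlgClosed.exists_pow_nat_eq w (Nat.pos_of_ne_zero hn)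
  have hz : ‖z‖ < 1 := by
    rwa [norm_pow, pow_lt_one_iff_of_nonneg (norm_nonneg z) hn] at hw
  have hω := Complex.isPrimitiveRoot_exp n hn
  have hnpos : (0 : ℝ) < n := by exact_mod_cast Nat.pos_of_ne_zero hn
  have hnorm : ‖(n : ℂ) * (sectionSeries f n).sum (z ^ n)‖ =
      n * ‖(sectionSeries f n).sum (z ^ n)‖ := by
    rw [norm_mul, Complex.norm_natCast]
  refine lt_of_mul_lt_mul_left ?_ hnpos.le
  rw [mul_one, ← hnorm, ← sum_rotations_eq_mul_sectionSeries_sum hd hf hω hn hz]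
  calc ‖∑ j ∈ Finset.range n, f (_ ^ j * z)‖
      ≤ ∑ j ∈ Finset.range n, ‖f (_ ^ j * z)‖ := norm_sum_le _ _
    _ < ∑ _j ∈ Finset.range n, (1 : ℝ) := by
      refine Finset.sum_lt_sum_of_nonempty (Finset.nonempty_range_iff.2 hn) fun j _ => ?_
      refine mem_ball_zero_iff.1 (hf (mem_ball_zero_iff.2 ?_))
      rwa [norm_mul, norm_pow, Complex.norm_eq_one_of_pow_eq_one hω.pow_eq_one hn, one_pow,
        one_mul]
    _ = n := by simp

theorem norm_taylorCoeff_le_one_sub_sq_of_mapsTo_ball (hn : n ≠ 0) :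
    ‖taylorCoeff f n‖ ≤ 1 - ‖f 0‖ ^ 2 := by
  have hh := hasFPowerSeriesOnBall_sectionSeries (n := n) hd hf
  have h0 : taylorCoeff f 0 = f 0 := by simp [taylorCoeff]
  have hball : eball (0 : ℂ) 1 = ball 0 1 := by
    rw [← ENNReal.coe_one, eball_coe, NNReal.coe_one]
  have key := norm_deriv_zero_le_one_sub_sq_of_mapsTo_ball (hball ▸ hh.differentiableOn)
    (mapsTo_sectionSeries_sum hd hf hn)
  rwa [hh.hasFPowerSeriesAt.deriv, ← hh.coeff_zero (fun _ => 0), sectionSeries_apply,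
    sectionSeries_apply, mul_one, mul_zero, one_pow, mul_one, pow_zero, mul_one, h0] at key

theorem tsum_norm_taylorCoeff_mul_pow_le {r : ℝ} (hr0 : 0 ≤ r) (hr1 : r < 1) {j : ℕ}
    (hj : j ≠ 0) :
    ∑' k, ‖taylorCoeff f (k + j)‖ * r ^ (k + j) ≤ (1 - ‖f 0‖ ^ 2) * (r ^ j / (1 - r)) := by
  have hgeom : HasSum (fun k => (1 - ‖f 0‖ ^ 2) * r ^ (k + j))
      ((1 - ‖f 0‖ ^ 2) * (r ^ j / (1 - r))) := by
    simpa only [pow_add, div_eq_inv_mul, ← mul_assoc] using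
      ((hasSum_geometric_of_lt_one hr0 hr1).mul_right (r ^ j)).mul_left (1 - ‖f 0‖ ^ 2)
  have hle : ∀ k, ‖taylorCoeff f (k + j)‖ * r ^ (k + j) ≤ (1 - ‖f 0‖ ^ 2) * r ^ (k + j) :=
    fun k => mul_le_mul_of_nonneg_right
      (norm_taylorCoeff_le_one_sub_sq_of_mapsTo_ball hd hf (by omega)) (pow_nonneg hr0 _)
  have hnonneg : ∀ k, 0 ≤ ‖taylorCoeff f (k + j)‖ * r ^ (k + j) := fun k => by positivity
  exact (Summable.of_nonneg_of_le hnonneg hle hgeom.summable).tsum_le_tsum hle hgeom.summable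
    |>.trans_eq hgeom.tsum_eq

end Wiener

lemma add_mul_one_sub_sq_div_le {ρ x y : ℝ} (hρ0 : 0 ≤ ρ) (hρ : 2 * ρ ≤ 1 - ρ ^ 2)
    (hxy : x ≤ y) (hy : y ≤ 1) :
    x + ρ * (1 - x ^ 2) / (1 - ρ ^ 2) ≤ y + ρ * (1 - y ^ 2) / (1 - ρ ^ 2) := by
  have hpos : 0 < 1 - ρ ^ 2 := by nlinarith
  have hdiff : y + ρ * (1 - y ^ 2) / (1 - ρ ^ 2) - (x + ρ * (1 - x ^ 2) / (1 - ρ ^ 2)) =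
      (y - x) * (1 - ρ ^ 2 - ρ * (x + y)) / (1 - ρ ^ 2) := by
    field_simp
    ring
  rw [← sub_nonneg, hdiff]
  exact div_nonneg (mul_nonneg (sub_nonneg.2 hxy) (by nlinarith)) hpos.le

lemma one_add_mul_sq_mul_le {c ρ : ℝ} (hc0 : 0 ≤ c) (hc1 : c ≤ 1) (hρ0 : 0 ≤ ρ)
    (hρ : 0 ≤ 1 - 2 * ρ - ρ ^ 2) :
    (1 + c) * (1 + c * ρ) ^ 2 * (1 - 2 * ρ - ρ ^ 2) ≤
      2 * (1 + ρ) ^ 2 * (1 - 2 * ρ - c * ρ ^ 2) := by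
  gcongr
  · linarith
  · exact mul_le_of_le_one_left hρ0 hc1
  · exact mul_le_of_le_one_left (sq_nonneg ρ) hc1

theorem bohr_sum_le_one {r ρ c a D S : ℝ} (hr1 : r < 1) (hρ0 : 0 ≤ ρ) (hc0 : 0 ≤ c)
    (hc1 : c < 1) (ha : a * (1 + c * ρ) ≤ c + ρ) (hD : D * (1 - ρ ^ 2) ≤ 1 - a ^ 2)
    (hS : S ≤ (1 - c ^ 2) * (r ^ 2 / (1 - r)))
    (hroot : (1 - r) * (ρ ^ 2 + 2 * ρ - 1) + 2 * r ^ 2 * (1 + ρ) ^ 2 ≤ 0) :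
    a + ρ * D + S ≤ 1 := by
  have hρ : 0 ≤ 1 - 2 * ρ - ρ ^ 2 := by nlinarith
  have hρ1 : 0 < 1 - ρ ^ 2 := by nlinarith
  have hcρ : 0 < 1 + c * ρ := by positivity
  set b := (c + ρ) / (1 + c * ρ) with hb_def
  have hab : a ≤ b := (le_div_iff₀ hcρ).2 ha
  have hb1 : b ≤ 1 := (div_le_one hcρ).2 (by nlinarith)
  have hb : b + ρ * (1 - b ^ 2) / (1 - ρ ^ 2) =
      1 - (1 - c) * ((1 - 2 * ρ - c * ρ ^ 2) / (1 + c * ρ) ^ 2) := by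
    rw [hb_def]
    field_simp
    ring
  have hDρ : ρ * D ≤ ρ * (1 - a ^ 2) / (1 - ρ ^ 2) := by
    rw [mul_div_assoc]
    exact mul_le_mul_of_nonneg_left ((le_div_iff₀ hρ1).2 hD) hρ0
  have hSρ : S ≤ (1 - c) * ((1 - 2 * ρ - c * ρ ^ 2) / (1 + c * ρ) ^ 2) := calc
    S ≤ (1 - c ^ 2) * (r ^ 2 / (1 - r)) := hS
    _ ≤ (1 - c ^ 2) * ((1 - 2 * ρ - ρ ^ 2) / (2 * (1 + ρ) ^ 2)) := by
      refine mul_le_mul_of_nonneg_left ?_ (by nlinarith)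
      rw [div_le_div_iff₀ (by linarith) (by positivity)]
      nlinarith
    _ = (1 - c) * ((1 + c) * (1 - 2 * ρ - ρ ^ 2) / (2 * (1 + ρ) ^ 2)) := by ring
    _ ≤ (1 - c) * ((1 - 2 * ρ - c * ρ ^ 2) / (1 + c * ρ) ^ 2) := by
      refine mul_le_mul_of_nonneg_left ?_ (by linarith)
      rw [div_le_div_iff₀ (by positivity) (by positivity)]
      nlinarith [one_add_mul_sq_mul_le hc0 hc1.le hρ0 hρ]
  linarith [add_mul_one_sub_sq_div_le hρ0 (by linarith) hab hb1]

/-- Theorem 2 (sufficiency): improved Bohr inequality with `|f(zᵐ)| + |z|ᵐ|f'(zᵐ)|`. -/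
theorem bohr_improved_one (f : ℂ → ℂ)
    (hd : DifferentiableOn ℂ f (Metric.ball (0 : ℂ) 1))
    (hb : ∀ z : ℂ, ‖z‖ < 1 → ‖f z‖ < 1)
    (m : ℕ) (hm : 1 ≤ m) (r : ℝ) (hr : r ∈ Set.Ico (0 : ℝ) 1)
    (hroot : (1 - r) * (r ^ (2 * m) + 2 * r ^ m - 1) + 2 * r ^ 2 * (1 + r ^ m) ^ 2 ≤ 0) :
    ∀ z : ℂ, ‖z‖ = r →
      ‖f (z ^ m)‖ + ‖z‖ ^ m * ‖deriv f (z ^ m)‖ +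
        ∑' k : ℕ, ‖iteratedDeriv (k + 2) f 0 / (Nat.factorial (k + 2) : ℂ)‖ * r ^ (k + 2)
        ≤ 1 := by
  intro z hz
  obtain ⟨hr0, hr1⟩ := hr
  have hf : MapsTo f (ball 0 1) (ball 0 1) := fun w hw =>
    mem_ball_zero_iff.2 (hb w (mem_ball_zero_iff.1 hw))
  have hzm : ‖z ^ m‖ = r ^ m := by rw [norm_pow, hz]
  have hzm1 : ‖z ^ m‖ < 1 := hzm ▸ pow_lt_one₀ hr0 hr1 (by omega)
  rw [hz]
  refine bohr_sum_le_one hr1 (pow_nonneg hr0 m) (norm_nonneg _) (hb 0 (by simp))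
    (hzm ▸ norm_mul_one_add_le_of_mapsTo_ball hd hf hzm1)
    (hzm ▸ norm_deriv_mul_le_one_sub_sq_of_mapsTo_ball hd hf hzm1)
    (tsum_norm_taylorCoeff_mul_pow_le hd hf hr0 hr1 two_ne_zero) ?_
  rwa [← pow_mul, mul_comm m 2]
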